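/- If the convex envelope of f on [a,b] touches f at an interior point ū (i.e., conv_{[a,b]} f(ū) = f(ū)), then the convex envelope on [a,b] equals the concatenation of the convex envelope on [a,ū] and the convex envelope on [ū,b]. -/

import Mathlib

open Set

/-- Convex envelope of `f` on `[a,b]`: pointwise supremum of all convex functions
on `[a,b]` lying below `f`. -/
noncomputable def convEnv (f : ℝ → ℝ) (a b : ℝ) (u : ℝ) : ℝ :=
  sSup {y : ℝ | ∃ g : ℝ → ℝ, ConvexOn ℝ (Set.Icc a b) g ∧
    (∀ x ∈ Set.Icc a b, g x ≤ f x) ∧ g u = y}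

namespace ConvEnvAux

variable {f : ℝ → ℝ} {a b u : ℝ}

lemma set_nonempty (hf : Continuous f) (hab : a ≤ b) (u : ℝ) :
    {y : ℝ | ∃ g : ℝ → ℝ, ConvexOn ℝ (Set.Icc a b) g ∧
      (∀ x ∈ Set.Icc a b, g x ≤ f x) ∧ g u = y}.Nonempty := by
  obtain ⟨x₀, hx₀, hmin⟩ := isCompact_Icc.exists_isMinOn (nonempty_Icc.2 hab)
    hf.continuousOn
  exact ⟨f x₀, fun _ => f x₀, convexOn_const _ (convex_Icc a b),
    fun x hx => hmin hx, rfl⟩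

lemma set_bddAbove (hu : u ∈ Icc a b) :
    BddAbove {y : ℝ | ∃ g : ℝ → ℝ, ConvexOn ℝ (Set.Icc a b) g ∧
      (∀ x ∈ Set.Icc a b, g x ≤ f x) ∧ g u = y} := by
  refine ⟨f u, ?_⟩
  rintro y ⟨g, hg, hle, rfl⟩
  exact hle u hu

lemma convEnv_le (hf : Continuous f) (hu : u ∈ Icc a b) : convEnv f a b u ≤ f u := by
  refine csSup_le (set_nonempty hf (hu.1.trans hu.2) u) ?_
  rintro y ⟨g, hg, hle, rfl⟩
  exact hle u hu

lemma le_convEnv {g : ℝ → ℝ} (hg : ConvexOn ℝ (Icc a b) g)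
    (hle : ∀ x ∈ Icc a b, g x ≤ f x) (hu : u ∈ Icc a b) :
    g u ≤ convEnv f a b u :=
  le_csSup (set_bddAbove hu) ⟨g, hg, hle, rfl⟩

/-- Easy direction: envelope on a bigger interval is smaller. -/
lemma convEnv_anti (hf : Continuous f) {a' b' : ℝ} (ha : a' ≤ a) (hb : b ≤ b')
    (hu : u ∈ Icc a b) : convEnv f a' b' u ≤ convEnv f a b u := by
  refine csSup_le_csSup (set_bddAbove hu) (set_nonempty hf ((ha.trans hu.1).trans (hu.2.trans hb)) u) ?_
  rintro y ⟨g, hg, hle, rfl⟩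
  exact ⟨g, hg.subset (Icc_subset_Icc ha hb) (convex_Icc a b),
    fun x hx => hle x (Icc_subset_Icc ha hb hx), rfl⟩

lemma convEnv_convexOn (hf : Continuous f) (hab : a ≤ b) :
    ConvexOn ℝ (Icc a b) (convEnv f a b) := by
  refine ⟨convex_Icc a b, fun x hx y hy μ ν hμ hν hμν => ?_⟩
  have hxy : μ • x + ν • y ∈ Icc a b := (convex_Icc a b) hx hy hμ hν hμν
  refine csSup_le (set_nonempty hf hab _) ?_
  rintro w ⟨g, hg, hle, rfl⟩
  calc g (μ • x + ν • y) ≤ μ • g x + ν • g y := hg.2 hx hy hμ hν hμν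
    _ ≤ μ • convEnv f a b x + ν • convEnv f a b y := by
        simp only [smul_eq_mul]
        gcongr
        · exact le_convEnv hg hle hx
        · exact le_convEnv hg hle hy

lemma slope_combo {P Q R y c z : ℝ} (h1 : y < c) (h2 : c < z)
    (hle : (Q - P) / (c - y) ≤ (R - Q) / (z - c)) :
    (Q - P) / (c - y) ≤ (R - P) / (z - y) ∧ (R - P) / (z - y) ≤ (R - Q) / (z - c) := by
  have hyc : (0:ℝ) < c - y := by linarith
  have hcz : (0:ℝ) < z - c := by linarith
  have hyz : (0:ℝ) < z - y := by linarith
  rw [div_le_div_iff₀ hyc hcz] at hle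
  constructor
  · rw [div_le_div_iff₀ hyc hyz]; nlinarith
  · rw [div_le_div_iff₀ hyz hcz]; nlinarith

/-- Gluing two convex functions at `c` with the slope compatibility condition. -/
lemma glue {p q : ℝ → ℝ} {c : ℝ} (hac : a ≤ c) (hcb : c ≤ b)
    (hp : ConvexOn ℝ (Icc a c) p) (hq : ConvexOn ℝ (Icc c b) q)
    (heq : p c = q c)
    (hslope : ∀ y ∈ Ico a c, ∀ z ∈ Ioc c b, (p c - p y) / (c - y) ≤ (q z - q c) / (z - c)) :
    ConvexOn ℝ (Icc a b) (fun x => if x ≤ c then p x else q x) := by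
  set h : ℝ → ℝ := fun x => if x ≤ c then p x else q x with hh
  have hL : ∀ x, x ≤ c → h x = p x := fun x hx => if_pos hx
  have hR : ∀ x, ¬ x ≤ c → h x = q x := fun x hx => if_neg hx
  rw [convexOn_iff_slope_mono_adjacent]
  refine ⟨convex_Icc a b, fun x y z hx hz hxy hyz => ?_⟩
  by_cases hzc : z ≤ c
  · -- all in [a,c]
    rw [hL x (hxy.le.trans (hyz.le.trans hzc)), hL y (hyz.le.trans hzc), hL z hzc]
    exact hp.slope_mono_adjacent ⟨hx.1, hxy.le.trans (hyz.le.trans hzc)⟩ ⟨(hx.1.trans hxy.le).trans hyz.le, hzc⟩ hxy hyz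
  · push_neg at hzc
    have hzcb : z ∈ Icc c b := ⟨hzc.le, hz.2⟩
    by_cases hxc : x ≤ c
    · by_cases hyc : y ≤ c
      · rcases eq_or_lt_of_le hyc with hyceq | hylt
        · -- y = c
          rw [hL x hxc, hL y hyc, hR z (not_le.2 hzc), hyceq, heq]
          have hxltc : x < c := hyceq ▸ hxy
          have := hslope x ⟨hx.1, hxltc⟩ z ⟨hzc, hz.2⟩
          rw [heq] at this
          exact this
        · -- y < c
          rw [hL x hxc, hL y hyc, hR z (not_le.2 hzc)]
          have s1 : (p y - p x) / (y - x) ≤ (p c - p y) / (c - y) :=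
            hp.slope_mono_adjacent ⟨hx.1, hxc⟩ (right_mem_Icc.2 hac) hxy hylt
          have s2 : (p c - p y) / (c - y) ≤ (q z - q c) / (z - c) :=
            hslope y ⟨hx.1.trans hxy.le, hylt⟩ z ⟨hzc, hz.2⟩
          rw [heq] at s1 s2
          exact s1.trans (slope_combo hylt hzc s2).1
      · -- c < y
        push_neg at hyc
        rw [hL x hxc, hR y (not_le.2 hyc), hR z (not_le.2 hzc)]
        have hs2 : (q y - q c) / (y - c) ≤ (q z - q y) / (z - y) :=
          hq.slope_mono_adjacent (left_mem_Icc.2 hcb) hzcb hyc hyz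
        rcases eq_or_lt_of_le hxc with hxceq | hxlt
        · rw [hxceq, heq]
          exact hs2
        · have s1 : (p c - p x) / (c - x) ≤ (q y - q c) / (y - c) :=
            hslope x ⟨hx.1, hxlt⟩ y ⟨hyc, hyz.le.trans hz.2⟩
          rw [heq] at s1
          exact (slope_combo hxlt hyc s1).2.trans hs2
    · -- c < x
      push_neg at hxc
      rw [hR x (not_le.2 hxc), hR y (not_le.2 (hxc.trans hxy)),
        hR z (not_le.2 (hxc.trans (hxy.trans hyz)))]
      exact hq.slope_mono_adjacent ⟨hxc.le, hx.2⟩ hzcb hxy hyz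

end ConvEnvAux

theorem convEnv_splits_at_touch_point (f : ℝ → ℝ) (a b u₀ : ℝ)
    (hf : Continuous f) (h1 : a < u₀) (h2 : u₀ < b)
    (htouch : convEnv f a b u₀ = f u₀) :
    (∀ u ∈ Set.Icc a u₀, convEnv f a b u = convEnv f a u₀ u) ∧
      (∀ u ∈ Set.Icc u₀ b, convEnv f a b u = convEnv f u₀ b u) := by
  open ConvEnvAux in
  have hab : a ≤ b := h1.le.trans h2.le
  set φ : ℝ → ℝ := fun x => convEnv f a b x with hφ
  have hφconv : ConvexOn ℝ (Icc a b) φ := convEnv_convexOn hf hab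
  have hφle : ∀ x ∈ Icc a b, φ x ≤ f x := fun x hx => convEnv_le hf hx
  set ψ : ℝ → ℝ := fun x => convEnv f a u₀ x with hψ
  set χ : ℝ → ℝ := fun x => convEnv f u₀ b x with hχ
  have hψconv : ConvexOn ℝ (Icc a u₀) ψ := convEnv_convexOn hf h1.le
  have hχconv : ConvexOn ℝ (Icc u₀ b) χ := convEnv_convexOn hf h2.le
  have hψle : ∀ x ∈ Icc a u₀, ψ x ≤ f x := fun x hx => convEnv_le hf hx
  have hχle : ∀ x ∈ Icc u₀ b, χ x ≤ f x := fun x hx => convEnv_le hf hx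
  -- easy direction: φ ≤ ψ on [a,u₀], φ ≤ χ on [u₀,b]
  have hφψ : ∀ u ∈ Icc a u₀, φ u ≤ ψ u := fun u hu => convEnv_anti hf le_rfl h2.le hu
  have hφχ : ∀ u ∈ Icc u₀ b, φ u ≤ χ u := fun u hu => convEnv_anti hf h1.le le_rfl hu
  have hu₀ab : u₀ ∈ Icc a b := ⟨h1.le, h2.le⟩
  -- touching values agree
  have hψu₀ : ψ u₀ = f u₀ :=
    le_antisymm (hψle u₀ (right_mem_Icc.2 h1.le))
      (htouch ▸ hφψ u₀ (right_mem_Icc.2 h1.le))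
  have hχu₀ : χ u₀ = f u₀ :=
    le_antisymm (hχle u₀ (left_mem_Icc.2 h2.le))
      (htouch ▸ hφχ u₀ (left_mem_Icc.2 h2.le))
  have hφu₀ : φ u₀ = f u₀ := htouch
  constructor
  · intro u hu
    refine le_antisymm (hφψ u hu) ?_
    -- glue ψ on [a,u₀] with φ on [u₀,b]
    set h : ℝ → ℝ := fun x => if x ≤ u₀ then ψ x else φ x with hh
    have hheq : ψ u₀ = φ u₀ := by rw [hψu₀, hφu₀]
    have hhconv : ConvexOn ℝ (Icc a b) h := by
      refine glue h1.le h2.le hψconv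
        (hφconv.subset (Icc_subset_Icc h1.le le_rfl) (convex_Icc _ _)) hheq ?_
      intro y hy z hz
      have hyu : y < u₀ := hy.2
      have huz : u₀ < z := hz.1
      have hψφy : φ y ≤ ψ y := hφψ y ⟨hy.1, hy.2.le⟩
      have s1 : (ψ u₀ - ψ y) / (u₀ - y) ≤ (φ u₀ - φ y) / (u₀ - y) := by
        gcongr
        · linarith
      have s2 : (φ u₀ - φ y) / (u₀ - y) ≤ (φ z - φ u₀) / (z - u₀) :=
        hφconv.slope_mono_adjacent ⟨hy.1, hyu.le.trans h2.le⟩ ⟨h1.le.trans huz.le, hz.2⟩ hyu huz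
      exact s1.trans s2
    have hhle : ∀ x ∈ Icc a b, h x ≤ f x := by
      intro x hx
      by_cases hxu : x ≤ u₀
      · simpa [hh, hxu] using hψle x ⟨hx.1, hxu⟩
      · simpa [hh, hxu] using hφle x hx
    have := le_convEnv hhconv hhle ⟨hu.1, hu.2.trans h2.le⟩
    simpa [hh, hu.2] using this
  · intro u hu
    refine le_antisymm (hφχ u hu) ?_
    set h : ℝ → ℝ := fun x => if x ≤ u₀ then φ x else χ x with hh
    have hheq : φ u₀ = χ u₀ := by rw [hχu₀, hφu₀]
    have hhconv : ConvexOn ℝ (Icc a b) h := by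
      refine glue h1.le h2.le
        (hφconv.subset (Icc_subset_Icc le_rfl h2.le) (convex_Icc _ _)) hχconv hheq ?_
      intro y hy z hz
      have hyu : y < u₀ := hy.2
      have huz : u₀ < z := hz.1
      have hφχz : φ z ≤ χ z := hφχ z ⟨huz.le, hz.2⟩
      have s1 : (φ u₀ - φ y) / (u₀ - y) ≤ (φ z - φ u₀) / (z - u₀) :=
        hφconv.slope_mono_adjacent ⟨hy.1, hyu.le.trans h2.le⟩ ⟨h1.le.trans huz.le, hz.2⟩ hyu huz
      have s2 : (φ z - φ u₀) / (z - u₀) ≤ (χ z - χ u₀) / (z - u₀) := by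
        gcongr
        · linarith
      exact s1.trans s2
    have hhle : ∀ x ∈ Icc a b, h x ≤ f x := by
      intro x hx
      by_cases hxu : x ≤ u₀
      · simpa [hh, hxu] using hφle x hx
      · simpa [hh, hxu] using hχle x ⟨le_of_not_ge hxu, hx.2⟩
    have key := le_convEnv hhconv hhle ⟨h1.le.trans hu.1, hu.2⟩
    rcases eq_or_lt_of_le hu.1 with rfl | hlt
    · simpa [hh, hheq] using key
    · simpa [hh, not_le.2 hlt] using key
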